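/- Let S, T be finite nonempty subsets of a metric space with |S ∩ T| = r, and p > 0. Then d^p_{MJ}(S,T) ≤ ( 1 - (r/2)(1/|S| + 1/|T|) )^{1/p} · d_H(S,T). -/

import Mathlib

open Finset Metric

noncomputable def dMJ {X : Type*} [MetricSpace X] (p : ℝ) (S T : Finset X) : ℝ :=
  ((∑ t ∈ T, infDist t (S : Set X) ^ p) / (2 * T.card)
    + (∑ s ∈ S, infDist s (T : Set X) ^ p) / (2 * S.card)) ^ (1 / p)

noncomputable def dHaus {X : Type*} [MetricSpace X] (S T : Finset X)
    (hS : S.Nonempty) (hT : T.Nonempty) : ℝ :=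
  max (S.sup' hS fun s => infDist s (T : Set X)) (T.sup' hT fun t => infDist t (S : Set X))

/-! Each point of `S ∩ T` contributes `0` to the sums defining `dMJ`, and every other point
at most `dHaus S T ^ p`; so the two averages are at most `(1 - r / #T) / 2` and
`(1 - r / #S) / 2` times `dHaus S T ^ p`, and taking `p`-th roots gives the bound. -/

section

variable {X : Type*} [PseudoMetricSpace X] [DecidableEq X]

theorem sum_infDist_rpow_le {p H : ℝ} (hp : 0 < p) (S T : Finset X)
    (hH : ∀ t ∈ T, infDist t (S : Set X) ≤ H) :
    ∑ t ∈ T, infDist t (S : Set X) ^ p ≤ #(T \ S) * H ^ p := by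
  rw [← sum_sdiff (inter_subset_left (s₂ := S)), sdiff_inter_self_left]
  have h_inter : ∑ t ∈ T ∩ S, infDist t (S : Set X) ^ p = 0 :=
    sum_eq_zero fun t ht => by
      rw [infDist_zero_of_mem (mem_coe.2 (mem_inter.1 ht).2), Real.zero_rpow hp.ne']
  rw [h_inter, add_zero, ← nsmul_eq_mul, ← sum_const]
  exact sum_le_sum fun t ht =>
    Real.rpow_le_rpow infDist_nonneg (hH t (mem_sdiff.1 ht).1) hp.le

theorem sum_infDist_rpow_div_le {p H : ℝ} (hp : 0 < p) (S T : Finset X) (hT : T.Nonempty)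
    (hH : ∀ t ∈ T, infDist t (S : Set X) ≤ H) :
    (∑ t ∈ T, infDist t (S : Set X) ^ p) / (2 * #T) ≤ (1 - #(S ∩ T) / #T) / 2 * H ^ p := by
  have hT_pos : (0 : ℝ) < #T := by exact_mod_cast hT.card_pos
  have h_card : (#(T \ S) : ℝ) = #T - #(S ∩ T) := by
    rw [eq_sub_iff_add_eq, inter_comm]
    exact_mod_cast card_sdiff_add_card_inter T S
  calc (∑ t ∈ T, infDist t (S : Set X) ^ p) / (2 * #T)
      ≤ #(T \ S) * H ^ p / (2 * #T) := by gcongr; exact sum_infDist_rpow_le hp S T hH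
    _ = (1 - #(S ∩ T) / #T) / 2 * H ^ p := by rw [h_card]; field_simp

end

section

variable {X : Type*} [MetricSpace X] {S T : Finset X} (hS : S.Nonempty) (hT : T.Nonempty)

theorem infDist_le_dHaus_left {s : X} (hs : s ∈ S) : infDist s (T : Set X) ≤ dHaus S T hS hT :=
  (le_sup' (fun s => infDist s (T : Set X)) hs).trans (le_max_left _ _)

theorem infDist_le_dHaus_right {t : X} (ht : t ∈ T) : infDist t (S : Set X) ≤ dHaus S T hS hT :=
  (le_sup' (fun t => infDist t (S : Set X)) ht).trans (le_max_right _ _)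

theorem dHaus_nonneg : 0 ≤ dHaus S T hS hT :=
  infDist_nonneg.trans (infDist_le_dHaus_left hS hT hS.choose_spec)

end

theorem rpow_one_div_le_of_le_mul_rpow {x c h p : ℝ} (hx : 0 ≤ x) (hc : 0 ≤ c) (hh : 0 ≤ h)
    (hp : 0 < p) (hxc : x ≤ c * h ^ p) : x ^ (1 / p) ≤ c ^ (1 / p) * h := by
  calc x ^ (1 / p) ≤ (c * h ^ p) ^ (1 / p) := by gcongr
    _ = c ^ (1 / p) * h := by
      rw [Real.mul_rpow hc (by positivity), ← Real.rpow_mul hh, mul_one_div_cancel hp.ne',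
        Real.rpow_one]

theorem mj_intersection_bound {X : Type*} [MetricSpace X] [DecidableEq X]
    (p : ℝ) (hp : 0 < p) (S T : Finset X) (hS : S.Nonempty) (hT : T.Nonempty)
    (r : ℕ) (hr : (S ∩ T).card = r) :
    dMJ p S T ≤
      (1 - (r / 2 : ℝ) * (1 / S.card + 1 / T.card)) ^ (1 / p) * dHaus S T hS hT := by
  have hT_avg := sum_infDist_rpow_div_le hp S T hT fun _ ↦ infDist_le_dHaus_right hS hT
  have hS_avg := sum_infDist_rpow_div_le hp T S hS fun _ ↦ infDist_le_dHaus_left hS hT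
  rw [inter_comm T S, hr] at hS_avg
  rw [hr] at hT_avg
  have hrS : (r : ℝ) / #S ≤ 1 :=
    div_le_one_of_le₀ (by exact_mod_cast hr ▸ card_le_card inter_subset_left) (by positivity)
  have hrT : (r : ℝ) / #T ≤ 1 :=
    div_le_one_of_le₀ (by exact_mod_cast hr ▸ card_le_card inter_subset_right) (by positivity)
  have h_coeff :
      1 - (r / 2 : ℝ) * (1 / #S + 1 / #T) = (1 - r / #T) / 2 + (1 - r / #S) / 2 := by
    ring
  have h_sum_nonneg (A B : Finset X) : 0 ≤ ∑ a ∈ A, infDist a (B : Set X) ^ p :=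
    sum_nonneg fun a _ ↦ Real.rpow_nonneg infDist_nonneg p
  refine rpow_one_div_le_of_le_mul_rpow
    (add_nonneg (div_nonneg (h_sum_nonneg T S) (by positivity))
      (div_nonneg (h_sum_nonneg S T) (by positivity)))
    (by rw [h_coeff]; linarith)
    (dHaus_nonneg hS hT) hp ?_
  rw [h_coeff, add_mul]
  exact add_le_add hT_avg hS_avg
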